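/- Let 1<α<2, n≥3, σ>0 and fix x ∈ ℝⁿ with x≠0. Define h(s) = s^{α−αn/2−1} μ_n(s^{−α/2}|x|) exp(−σ(s^{−α/2}|x|)^{2/(2−α)}) for s>0. Then ∫_0^t h(t−τ)(1+τ)^{−1} dτ → 0 as t → ∞. -/

import Mathlib

/-!
After the substitution `s = t - τ` the integral becomes `∫₀ᵗ h(s) (1 + t - s)⁻¹ ds`, and the
factor `(1 + t - s)⁻¹ ≤ 1` tends to `0` for each fixed `s`, so by dominated convergence it
suffices that `h` is integrable on `(0, ∞)`. Writing `c = |x|`, `h(s)` is at most a multiple of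
`(s^{-α/2-1} + s^{-α-1} + s^{-3α/2-1}) exp(-σ c^{2/(2-α)} s^{-α/(2-α)})` (for `n = 4` the
logarithm is absorbed by `s^{±α/2}`): every power is beaten by the exponential at `0`, and all
exponents are below `-1`.
-/

open MeasureTheory Filter Set

/-- `μ_n(z)` for `z > 0`: `1` if `n = 3`, `1 + |log z|` if `n = 4`, `z^{-n+4}` if `n ≥ 5`. -/
noncomputable def mun (n : ℕ) (z : ℝ) : ℝ :=
  if n = 3 then 1 else if n = 4 then 1 + |Real.log z| else z ^ ((4 : ℝ) - n)

open Real Topology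

theorem tendsto_intervalIntegral_comp_sub_mul {f g : ℝ → ℝ} {B : ℝ}
    (hf : IntegrableOn f (Ioi 0)) (hg : Measurable g) (hgB : ∀ τ, 0 ≤ τ → |g τ| ≤ B)
    (hg_lim : Tendsto g atTop (𝓝 0)) :
    Tendsto (fun t => ∫ τ in (0 : ℝ)..t, f (t - τ) * g τ) atTop (𝓝 0) := by
  set F : ℝ → ℝ → ℝ := fun t => (Iic t).indicator fun s => f s * g (t - s)
  have hconv : ∀ t, 0 ≤ t → ∫ τ in (0 : ℝ)..t, f (t - τ) * g τ = ∫ s in Ioi 0, F t s := by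
    intro t ht
    have hflip := intervalIntegral.integral_comp_sub_left (a := 0) (b := t)
      (fun s => f s * g (t - s)) t
    simp only [sub_sub_cancel, sub_self, sub_zero] at hflip
    rw [hflip, intervalIntegral.integral_of_le ht, integral_indicator measurableSet_Iic,
      Measure.restrict_restrict measurableSet_Iic, Iic_inter_Ioi]
  have hB : 0 ≤ B := (abs_nonneg _).trans (hgB 0 le_rfl)
  have hlim : Tendsto (fun t => ∫ s in Ioi 0, F t s) atTop (𝓝 (∫ s in Ioi (0 : ℝ), (0 : ℝ))) := by
    refine tendsto_integral_filter_of_dominated_convergence (fun s => B * |f s|) ?_ ?_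
      (hf.norm.const_mul B) ?_
    · exact Eventually.of_forall fun t => (hf.aestronglyMeasurable.mul
        (hg.comp (measurable_const.sub measurable_id)).aestronglyMeasurable).indicator
          measurableSet_Iic
    · refine Eventually.of_forall fun t => Eventually.of_forall fun s => ?_
      dsimp only [F]
      by_cases hst : s ∈ Iic t
      · rw [indicator_of_mem hst, norm_mul, Real.norm_eq_abs, Real.norm_eq_abs, mul_comm]
        exact mul_le_mul_of_nonneg_right (hgB _ (sub_nonneg.2 (mem_Iic.1 hst))) (abs_nonneg _)
      · rw [indicator_of_notMem hst, norm_zero]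
        positivity
    · refine Eventually.of_forall fun s => ?_
      have hg_shift : Tendsto (fun t => f s * g (t - s)) atTop (𝓝 (f s * 0)) :=
        (hg_lim.comp (tendsto_atTop_add_const_right _ (-s) tendsto_id)).const_mul _
      rw [mul_zero] at hg_shift
      exact hg_shift.congr'
        ((eventually_ge_atTop s).mono fun t hst => (indicator_of_mem hst _).symm)
  rw [integral_zero] at hlim
  exact hlim.congr' ((eventually_ge_atTop 0).mono fun t ht => (hconv t ht).symm)

theorem integrableOn_rpow_mul_exp_neg_mul_rpow_neg {q a r : ℝ} (hq : q < -1) (ha : 0 < a)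
    (hr : 0 < r) : IntegrableOn (fun s => s ^ q * exp (-a * s ^ (-r))) (Ioi 0) := by
  -- substitute `u = s ^ (-r)`: the integrand becomes `u ^ m * exp (-a * u)` with `m > -1`
  have hm : -1 < -(q + 1) / r - 1 := by
    have : 0 < -(q + 1) / r := div_pos (by linarith) hr
    linarith
  refine ((integrableOn_Ioi_comp_rpow_iff' _ (neg_ne_zero.2 hr.ne')).2
    (integrableOn_rpow_mul_exp_neg_mul_rpow hm one_pos ha)).congr_fun (fun s hs => ?_)
    measurableSet_Ioi
  have hs : 0 < s := hs
  simp only [smul_eq_mul, rpow_one]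
  rw [← rpow_mul hs.le, ← mul_assoc, ← rpow_add hs]
  congr 2
  field_simp
  ring

theorem mul_abs_log_le_rpow_add_rpow_neg {s ε : ℝ} (hs : 0 < s) (hε : 0 < ε) :
    ε * |log s| ≤ s ^ ε + s ^ (-ε) := by
  have h₁ := log_le_rpow_div hs.le hε
  have h₂ := log_le_rpow_div (inv_nonneg.2 hs.le) hε
  rw [log_inv, inv_rpow hs.le, ← rpow_neg hs.le] at h₂
  have : 0 < s ^ ε := by positivity
  have : 0 < s ^ (-ε) := by positivity
  rw [le_div_iff₀ hε] at h₁ h₂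
  rcases abs_cases (log s) with ⟨h, _⟩ | ⟨h, _⟩ <;> rw [h] <;> nlinarith

theorem mun_nonneg (n : ℕ) {z : ℝ} (hz : 0 ≤ z) : 0 ≤ mun n z := by
  unfold mun
  split_ifs <;> positivity

@[fun_prop]
theorem measurable_mun (n : ℕ) : Measurable (mun n) := by
  unfold mun
  split_ifs <;> fun_prop

theorem rpow_mul_mun_le (n : ℕ) {α c s : ℝ} (hα : 0 < α) (hc : 0 < c) (hs : 0 < s) :
    s ^ (α - α * n / 2 - 1) * mun n (s ^ (-α / 2) * c) ≤ (1 + |log c| + c ^ ((4 : ℝ) - n)) *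
      (s ^ (-α / 2 - 1) + s ^ (-α - 1) + s ^ (-(3 * α / 2) - 1)) := by
  have h₁ : 0 < s ^ (-α / 2 - 1) := by positivity
  have h₂ : 0 < s ^ (-α - 1) := by positivity
  have h₃ : 0 < s ^ (-(3 * α / 2) - 1) := by positivity
  have hlogc := abs_nonneg (log c)
  have hK : 1 + |log c| ≤ 1 + |log c| + c ^ ((4 : ℝ) - n) :=
    le_add_of_nonneg_right (by positivity)
  have hK' : c ^ ((4 : ℝ) - n) ≤ 1 + |log c| + c ^ ((4 : ℝ) - n) :=
    le_add_of_nonneg_left (by positivity)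
  -- so that rewriting with `n = 3` or `n = 4` below leaves the constant alone
  generalize 1 + |log c| + c ^ ((4 : ℝ) - n) = K at hK hK' ⊢
  unfold mun
  split_ifs with h3 h4
  · rw [h3, show α - α * ((3 : ℕ) : ℝ) / 2 - 1 = -α / 2 - 1 by push_cast; ring, mul_one]
    nlinarith
  · have hlog : |log (s ^ (-α / 2) * c)| ≤ |log c| + (s ^ (α / 2) + s ^ (-(α / 2))) := by
      rw [log_mul (by positivity) hc.ne', log_rpow hs]
      have := mul_abs_log_le_rpow_add_rpow_neg hs (half_pos hα)
      calc |-α / 2 * log s + log c| ≤ α / 2 * |log s| + |log c| := by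
            refine (abs_add_le _ _).trans_eq ?_
            rw [abs_mul, neg_div, abs_neg, abs_of_pos (half_pos hα)]
        _ ≤ _ := by linarith
    have hsplit : s ^ (-α - 1) * (s ^ (α / 2) + s ^ (-(α / 2))) =
        s ^ (-α / 2 - 1) + s ^ (-(3 * α / 2) - 1) := by
      rw [mul_add, ← rpow_add hs, ← rpow_add hs]
      ring_nf
    rw [h4, show α - α * ((4 : ℕ) : ℝ) / 2 - 1 = -α - 1 by push_cast; ring]
    nlinarith
  · rw [mul_rpow (by positivity) hc.le, ← rpow_mul hs.le, ← mul_assoc, ← rpow_add hs,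
      show α - α * n / 2 - 1 + -α / 2 * (4 - n) = -α - 1 by ring]
    nlinarith

noncomputable def kernelProfile (n : ℕ) (α σ c s : ℝ) : ℝ :=
  s ^ (α - α * n / 2 - 1) * mun n (s ^ (-α / 2) * c) * exp (-σ * (s ^ (-α / 2) * c) ^ (2 / (2 - α)))

theorem integrableOn_kernelProfile (n : ℕ) {α σ c : ℝ} (hα₀ : 0 < α) (hα₂ : α < 2) (hσ : 0 < σ)
    (hc : 0 < c) : IntegrableOn (kernelProfile n α σ c) (Ioi 0) := by
  set a := σ * c ^ (2 / (2 - α))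
  set r := α / (2 - α)
  have ha : 0 < a := by positivity
  have hr : 0 < r := div_pos hα₀ (by linarith)
  have hexp : ∀ s, 0 < s →
      -σ * (s ^ (-α / 2) * c) ^ (2 / (2 - α)) = -a * s ^ (-r) := fun s hs => by
    rw [mul_rpow (by positivity) hc.le, ← rpow_mul hs.le]
    rw [show -α / 2 * (2 / (2 - α)) = -r by simp only [r]; field_simp]
    ring
  set K := 1 + |log c| + c ^ ((4 : ℝ) - n)
  have hdom : IntegrableOn (fun s => K * (s ^ (-α / 2 - 1) * exp (-a * s ^ (-r)) +
      s ^ (-α - 1) * exp (-a * s ^ (-r)) + s ^ (-(3 * α / 2) - 1) * exp (-a * s ^ (-r))))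
      (Ioi 0) := by
    refine Integrable.const_mul (Integrable.add (Integrable.add ?_ ?_) ?_) K <;>
      refine integrableOn_rpow_mul_exp_neg_mul_rpow_neg ?_ ha hr <;> linarith
  refine hdom.mono' ?_ ((ae_restrict_mem measurableSet_Ioi).mono fun s hs => ?_)
  · unfold kernelProfile
    exact Measurable.aestronglyMeasurable (by fun_prop)
  · have hs : 0 < s := hs
    have hmun := mun_nonneg n (z := s ^ (-α / 2) * c) (by positivity)
    rw [Real.norm_eq_abs, abs_of_nonneg (by unfold kernelProfile; positivity), kernelProfile,
      hexp s hs, ← add_mul, ← add_mul, ← mul_assoc]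
    exact mul_le_mul_of_nonneg_right (rpow_mul_mun_le n hα₀ hc hs) (exp_pos _).le

theorem convolution_with_decaying_factor_tendsto_zero_general
    (α σ : ℝ) (n : ℕ) (hα₁ : 1 < α) (hα₂ : α < 2) (hσ : 0 < σ)
    (x : EuclideanSpace ℝ (Fin n)) (hx : x ≠ 0)
    (h : ℝ → ℝ)
    (hh : ∀ s : ℝ, h s = s ^ (α - α * n / 2 - 1) * mun n (s ^ (-α / 2) * ‖x‖)
        * Real.exp (-σ * (s ^ (-α / 2) * ‖x‖) ^ (2 / (2 - α)))) :
    Tendsto (fun t : ℝ => ∫ τ in (0 : ℝ)..t, h (t - τ) * (1 + τ)⁻¹) atTop (nhds 0) := by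
  obtain rfl : h = kernelProfile n α σ ‖x‖ := funext hh
  refine tendsto_intervalIntegral_comp_sub_mul (B := 1)
    (integrableOn_kernelProfile n (by linarith) hα₂ hσ (norm_pos_iff.2 hx)) (by fun_prop)
    (fun τ hτ => ?_) (tendsto_inv_atTop_zero.comp (tendsto_atTop_add_const_left _ 1 tendsto_id))
  rw [abs_inv, abs_of_nonneg (by linarith)]
  exact inv_le_one_of_one_le₀ (by linarith)

/-- For fixed `x ≠ 0`, the convolution of the kernel profile
`h(s) = s^{α-αn/2-1} μ_n(s^{-α/2}|x|) exp(-σ(s^{-α/2}|x|)^{2/(2-α)})` with `(1+τ)^{-1}`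
tends to `0` as `t → ∞`. -/
theorem convolution_with_decaying_factor_tendsto_zero
    (α σ : ℝ) (n : ℕ) (hα₁ : 1 < α) (hα₂ : α < 2) (hn : 3 ≤ n) (hσ : 0 < σ)
    (x : EuclideanSpace ℝ (Fin n)) (hx : x ≠ 0)
    (h : ℝ → ℝ)
    (hh : ∀ s : ℝ, h s = s ^ (α - α * n / 2 - 1) * mun n (s ^ (-α / 2) * ‖x‖)
        * Real.exp (-σ * (s ^ (-α / 2) * ‖x‖) ^ (2 / (2 - α)))) :
    Tendsto (fun t : ℝ => ∫ τ in (0 : ℝ)..t, h (t - τ) * (1 + τ)⁻¹) atTop (nhds 0) :=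
  convolution_with_decaying_factor_tendsto_zero_general α σ n hα₁ hα₂ hσ x hx h hh
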